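/- Let n ≥ 2 and let e be a random vector uniformly distributed on the unit Euclidean sphere S₂ⁿ(1) ⊂ ℝⁿ. Then E[‖e‖_∞²] ≤ 4·(ln n)/n. -/

import Mathlib

open MeasureTheory Metric

/-- A probability measure on `ℝⁿ` which is carried by the unit Euclidean sphere and is
invariant under all linear isometries: the (unique) uniform distribution on the sphere. -/
def IsUniformOnSphere {n : ℕ} (σ : Measure (EuclideanSpace ℝ (Fin n))) : Prop :=
  IsProbabilityMeasure σ ∧
    σ (Metric.sphere (0 : EuclideanSpace ℝ (Fin n)) 1)ᶜ = 0 ∧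
    ∀ T : EuclideanSpace ℝ (Fin n) ≃ₗᵢ[ℝ] EuclideanSpace ℝ (Fin n), σ.map T = σ

/-- The `ℓ_∞` norm `maxᵢ |xᵢ|` on `ℝⁿ`. -/
noncomputable def linftyNorm {n : ℕ} (x : EuclideanSpace ℝ (Fin n)) : ℝ :=
  ⨆ i, |x i|

/-!
Rotating `e` in a coordinate plane `(i, j)` and averaging over the angle gives
`E[eᵢ^(p+2)] = (p+1) E[eᵢ^p eⱼ²]`: the difference of the two integrands is the angular derivative
of `eⱼ eᵢ^(p+1)` along the rotation. Summing over `j` with `∑ⱼ eⱼ² = 1` yields the exact moments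
`E[eᵢ^(2k)] = ∏_{j<k} (2j+1)/(n+2j) ≤ (2k-1)!!/nᵏ`. By Jensen,
`(E‖e‖∞²)ᵏ ≤ E‖e‖∞^(2k) ≤ ∑ᵢ E[eᵢ^(2k)] ≤ n (2k-1)!!/nᵏ`, and `k = ⌊ln n⌋ + 1` (or `k = 1` when
`n < 8`) makes the right-hand side at most `(4 ln n / n)ᵏ`.
-/

open Real Finset

section PlaneRotation

variable {ι : Type*} [Fintype ι] [DecidableEq ι]

noncomputable def planeRotation (i j : ι) (hij : i ≠ j) (θ : ℝ) :
    EuclideanSpace ℝ ι ≃ₗᵢ[ℝ] EuclideanSpace ℝ ι :=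
  LinearIsometry.toLinearIsometryEquiv
    { toFun := fun x : EuclideanSpace ℝ ι => WithLp.toLp 2 fun l =>
        if l = i then cos θ * x i - sin θ * x j
        else if l = j then sin θ * x i + cos θ * x j else x l
      map_add' := fun x y => by
        ext l; simp only [PiLp.add_apply]; split_ifs <;> ring
      map_smul' := fun c x => by
        ext l; simp only [PiLp.smul_apply, smul_eq_mul, RingHom.id_apply]; split_ifs <;> ring
      norm_map' := fun x => by
        simp only [LinearMap.coe_mk, AddHom.coe_mk, EuclideanSpace.norm_eq, Real.norm_eq_abs,
          sq_abs]
        congr 1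
        rw [← sub_eq_zero, ← Finset.sum_sub_distrib,
          Fintype.sum_eq_add i j hij fun l ⟨hli, hlj⟩ => by simp [hli, hlj]]
        simp only [if_true, if_neg hij.symm]
        linear_combination (x i ^ 2 + x j ^ 2) * sin_sq_add_cos_sq θ }
    rfl

lemma planeRotation_apply_left {i j : ι} (hij : i ≠ j) (θ : ℝ) (x : EuclideanSpace ℝ ι) :
    planeRotation i j hij θ x i = cos θ * x i - sin θ * x j := by
  simp [planeRotation]

lemma planeRotation_apply_right {i j : ι} (hij : i ≠ j) (θ : ℝ) (x : EuclideanSpace ℝ ι) :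
    planeRotation i j hij θ x j = sin θ * x i + cos θ * x j := by
  simp [planeRotation, hij.symm]

end PlaneRotation

theorem Continuous.integrable_of_ae_mem_compact {X : Type*} [TopologicalSpace X] [T2Space X]
    [MeasurableSpace X] [OpensMeasurableSpace X] {μ : Measure X} [IsFiniteMeasure μ]
    {K : Set X} (hK : IsCompact K) (hμK : ∀ᵐ x ∂μ, x ∈ K) {f : X → ℝ} (hf : Continuous f) :
    Integrable f μ := by
  rw [← Measure.restrict_eq_self_of_ae_mem hμK]
  exact hf.continuousOn.integrableOn_compact hK

lemma integral_cos_sin_pow_identity (p : ℕ) (a b : ℝ) :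
    ∫ θ in (0)..(2 * π), ((cos θ * a - sin θ * b) ^ (p + 2)
      - (p + 1) * ((cos θ * a - sin θ * b) ^ p * (sin θ * a + cos θ * b) ^ 2)) = 0 := by
  have hderiv : ∀ θ,
      HasDerivAt (fun θ => (sin θ * a + cos θ * b) * (cos θ * a - sin θ * b) ^ (p + 1))
      ((cos θ * a - sin θ * b) ^ (p + 2)
        - (p + 1) * ((cos θ * a - sin θ * b) ^ p * (sin θ * a + cos θ * b) ^ 2)) θ := by
    intro θ
    have hu : HasDerivAt (fun θ => cos θ * a - sin θ * b) (-(sin θ * a + cos θ * b)) θ :=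
      (((hasDerivAt_cos θ).mul_const a).sub ((hasDerivAt_sin θ).mul_const b)).congr_deriv
        (by ring)
    have hv : HasDerivAt (fun θ => sin θ * a + cos θ * b) (cos θ * a - sin θ * b) θ :=
      (((hasDerivAt_sin θ).mul_const a).add ((hasDerivAt_cos θ).mul_const b)).congr_deriv
        (by ring)
    exact (hv.mul (hu.fun_pow (p + 1))).congr_deriv (by push_cast; ring)
  rw [intervalIntegral.integral_eq_sub_of_hasDerivAt (fun θ _ => hderiv θ)
    (Continuous.intervalIntegrable (by fun_prop) _ _)]
  simp

lemma linftyNorm_eq_norm {n : ℕ} (x : EuclideanSpace ℝ (Fin n)) :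
    linftyNorm x = ‖WithLp.ofLp x‖ := by
  rcases isEmpty_or_nonempty (Fin n) with _ | _
  · simp [linftyNorm, Subsingleton.elim (WithLp.ofLp x) 0]
  · exact (IsGreatest.pi_norm (WithLp.ofLp x)).csSup_eq

@[fun_prop]
lemma continuous_linftyNorm {n : ℕ} : Continuous (linftyNorm (n := n)) := by
  simp only [funext linftyNorm_eq_norm]
  fun_prop

lemma linftyNorm_pow_le_sum {n k : ℕ} (hk : k ≠ 0) (x : EuclideanSpace ℝ (Fin n)) :
    linftyNorm x ^ (2 * k) ≤ ∑ i, x i ^ (2 * k) := by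
  rcases isEmpty_or_nonempty (Fin n) with _ | _
  · simp [linftyNorm, hk]
  · obtain ⟨⟨i, hi : |x i| = _⟩, -⟩ := IsGreatest.pi_norm (WithLp.ofLp x)
    rw [linftyNorm_eq_norm, ← hi, pow_mul, sq_abs, ← pow_mul]
    exact single_le_sum (fun j _ => (even_two_mul k).pow_nonneg _) (mem_univ i)

namespace IsUniformOnSphere

variable {n : ℕ} {σ : Measure (EuclideanSpace ℝ (Fin n))}

lemma ae_mem_sphere (hσ : IsUniformOnSphere σ) :
    ∀ᵐ x ∂σ, x ∈ sphere (0 : EuclideanSpace ℝ (Fin n)) 1 :=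
  mem_ae_iff.2 hσ.2.1

lemma ae_sum_sq_eq_one (hσ : IsUniformOnSphere σ) : ∀ᵐ x ∂σ, ∑ i, x i ^ 2 = 1 := by
  filter_upwards [hσ.ae_mem_sphere] with x hx
  rw [mem_sphere_zero_iff_norm] at hx
  simpa [hx] using (EuclideanSpace.real_norm_sq_eq x).symm

lemma integrable_of_continuous (hσ : IsUniformOnSphere σ) {f : EuclideanSpace ℝ (Fin n) → ℝ}
    (hf : Continuous f) : Integrable f σ :=
  have := hσ.1
  hf.integrable_of_ae_mem_compact (isCompact_sphere 0 1) hσ.ae_mem_sphere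

lemma integral_comp_linearIsometryEquiv (hσ : IsUniformOnSphere σ)
    (T : EuclideanSpace ℝ (Fin n) ≃ₗᵢ[ℝ] EuclideanSpace ℝ (Fin n))
    (f : EuclideanSpace ℝ (Fin n) → ℝ) :
    ∫ x, f (T x) ∂σ = ∫ x, f x ∂σ := by
  conv_rhs => rw [← hσ.2.2 T]
  exact (integral_map_equiv T.toHomeomorph.toMeasurableEquiv f).symm

lemma integral_pow_add_two (hσ : IsUniformOnSphere σ) {i j : Fin n} (hij : i ≠ j) (p : ℕ) :
    ∫ x, x i ^ (p + 2) ∂σ = (p + 1) * ∫ x, x i ^ p * x j ^ 2 ∂σ := by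
  have := hσ.1
  have : IsFiniteMeasure (volume.restrict (Set.uIoc 0 (2 * π))) :=
    isFiniteMeasure_restrict.2 (by simp [ENNReal.mul_eq_top])
  set g : EuclideanSpace ℝ (Fin n) → ℝ := fun x =>
    x i ^ (p + 2) - (p + 1) * (x i ^ p * x j ^ 2)
  set G : ℝ → EuclideanSpace ℝ (Fin n) → ℝ := fun θ x =>
    (cos θ * x i - sin θ * x j) ^ (p + 2)
      - (p + 1) * ((cos θ * x i - sin θ * x j) ^ p * (sin θ * x i + cos θ * x j) ^ 2)
  have hG : ∀ θ, ∫ x, G θ x ∂σ = ∫ x, g x ∂σ := fun θ => by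
    simpa [g, planeRotation_apply_left, planeRotation_apply_right] using
      hσ.integral_comp_linearIsometryEquiv (planeRotation i j hij θ) g
  have hG_int :
      Integrable (Function.uncurry G) ((volume.restrict (Set.uIoc 0 (2 * π))).prod σ) := by
    refine Continuous.integrable_of_ae_mem_compact
      ((isCompact_uIcc (a := 0) (b := 2 * π)).prod (isCompact_sphere 0 1))
      ((Measure.ae_prod_mem_iff_ae_ae_mem
        (measurableSet_uIcc.prod isClosed_sphere.measurableSet)).2 ?_) ?_
    · filter_upwards [ae_restrict_mem measurableSet_uIoc] with θ hθ
      filter_upwards [hσ.ae_mem_sphere] with x hx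
      exact ⟨Set.uIoc_subset_uIcc hθ, hx⟩
    · fun_prop
  -- Fubini: every `θ`-slice of `G` integrates to `∫ g ∂σ`, every `x`-slice to `0`.
  have hswap := intervalIntegral_integral_swap hG_int
  simp only [hG, intervalIntegral.integral_const, integral_cos_sin_pow_identity, G] at hswap
  have hg : ∫ x, g x ∂σ = 0 := by simpa [pi_ne_zero] using hswap
  rwa [integral_sub (hσ.integrable_of_continuous (by fun_prop))
    ((hσ.integrable_of_continuous (by fun_prop)).const_mul _), integral_const_mul,
    sub_eq_zero] at hg

lemma integral_pow_two_mul_add_two (hσ : IsUniformOnSphere σ) (i : Fin n) (k : ℕ) :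
    (n + 2 * k) * ∫ x, x i ^ (2 * k + 2) ∂σ = (2 * k + 1) * ∫ x, x i ^ (2 * k) ∂σ := by
  have hsum : ∫ x, x i ^ (2 * k) ∂σ = ∑ j, ∫ x, x i ^ (2 * k) * x j ^ 2 ∂σ := by
    rw [← integral_finsetSum _ fun j _ => hσ.integrable_of_continuous (by fun_prop)]
    refine integral_congr_ae ?_
    filter_upwards [hσ.ae_sum_sq_eq_one] with x hx
    rw [← Finset.mul_sum, hx, mul_one]
  have hoff : ∀ j ∈ univ.erase i,
      (2 * k + 1) * ∫ x, x i ^ (2 * k) * x j ^ 2 ∂σ = ∫ x, x i ^ (2 * k + 2) ∂σ := by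
    intro j hj
    rw [hσ.integral_pow_add_two (ne_of_mem_erase hj).symm (2 * k)]
    push_cast
    ring
  have hdiag : ∫ x, x i ^ (2 * k) * x i ^ 2 ∂σ = ∫ x, x i ^ (2 * k + 2) ∂σ := by
    simp only [← pow_add]
  rw [hsum, ← Finset.add_sum_erase _ _ (mem_univ i), hdiag, mul_add, Finset.mul_sum,
    sum_congr rfl hoff, sum_const, card_erase_of_mem (mem_univ i), card_univ, Fintype.card_fin,
    nsmul_eq_mul, Nat.cast_pred i.pos]
  ring

lemma integral_pow_two_mul (hσ : IsUniformOnSphere σ) (i : Fin n) (k : ℕ) :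
    ∫ x, x i ^ (2 * k) ∂σ = ∏ j ∈ range k, (2 * j + 1 : ℝ) / (n + 2 * j) := by
  have := hσ.1
  induction k with
  | zero => simp
  | succ k ih =>
    have hpos : (0 : ℝ) < n + 2 * k := by have := i.pos; positivity
    rw [prod_range_succ, ← ih, mul_add_one, mul_div_assoc', eq_div_iff hpos.ne', mul_comm,
      hσ.integral_pow_two_mul_add_two i k]
    ring

lemma integral_linftyNorm_sq_pow_le (hσ : IsUniformOnSphere σ) {k : ℕ} (hk : k ≠ 0) :
    (∫ x, linftyNorm x ^ 2 ∂σ) ^ k ≤ n * ∏ j ∈ range k, (2 * j + 1 : ℝ) / (n + 2 * j) := by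
  have := hσ.1
  calc (∫ x, linftyNorm x ^ 2 ∂σ) ^ k ≤ ∫ x, (linftyNorm x ^ 2) ^ k ∂σ :=
        (convexOn_pow k).map_integral_le (continuous_pow k).continuousOn isClosed_Ici
          (ae_of_all _ fun x => Set.mem_Ici.2 (sq_nonneg _))
          (hσ.integrable_of_continuous (by fun_prop)) (hσ.integrable_of_continuous (by fun_prop))
    _ ≤ ∫ x, ∑ i, x i ^ (2 * k) ∂σ := by
        refine integral_mono (hσ.integrable_of_continuous (by fun_prop))
          (hσ.integrable_of_continuous (by fun_prop)) fun x => ?_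
        rw [← pow_mul]
        exact linftyNorm_pow_le_sum hk x
    _ = n * ∏ j ∈ range k, (2 * j + 1 : ℝ) / (n + 2 * j) := by
        rw [integral_finsetSum _ fun i _ => hσ.integrable_of_continuous (by fun_prop)]
        simp [hσ.integral_pow_two_mul]

end IsUniformOnSphere

lemma two_mul_pow_le_succ_pow (m : ℕ) : 2 * m ^ (m + 1) ≤ (m + 1) ^ (m + 1) := by
  have bernoulli :=
    pow_add_mul_le_add_pow (a := m) (b := 1) (Nat.zero_le _) (Nat.zero_le _) (m + 1)
  simp only [Nat.cast_id, Nat.add_sub_cancel, mul_one] at bernoulli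
  calc 2 * m ^ (m + 1) = m ^ (m + 1) + m * m ^ m := by ring
    _ ≤ m ^ (m + 1) + (m + 1) * m ^ m := by gcongr; omega
    _ ≤ (m + 1) ^ (m + 1) := bernoulli

lemma exp_mul_prod_odd_le {m : ℕ} (hm : 2 ≤ m) :
    exp (m + 1) * ∏ j ∈ range (m + 1), (2 * j + 1 : ℝ) ≤ (4 * m) ^ (m + 1) := by
  have he : exp 1 < 2.7182818286 := exp_one_lt_d9
  induction m, hm using Nat.le_induction with
  | base =>
    have := pow_le_pow_left₀ (exp_pos 1).le he.le 3
    rw [exp_one_pow] at this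
    norm_num [prod_range_succ] at this ⊢
    linarith
  | succ m hm ih =>
    have hpow : 2 * (m : ℝ) ^ (m + 1) ≤ (m + 1) ^ (m + 1) := by
      exact_mod_cast two_mul_pow_le_succ_pow m
    have hm' : (2 : ℝ) ≤ m := by exact_mod_cast hm
    calc exp ((m + 1 : ℕ) + 1) * ∏ j ∈ range (m + 1 + 1), (2 * j + 1 : ℝ)
        = exp 1 * (2 * m + 3) * (exp (m + 1) * ∏ j ∈ range (m + 1), (2 * j + 1 : ℝ)) := by
          rw [prod_range_succ, show ((m + 1 : ℕ) : ℝ) + 1 = 1 + (m + 1) by push_cast; ring,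
            exp_add]
          push_cast
          ring
      _ ≤ exp 1 * (2 * m + 3) * (4 * m) ^ (m + 1) := by gcongr
      _ ≤ 8 * (m + 1) * (4 * m) ^ (m + 1) :=
          mul_le_mul_of_nonneg_right (by nlinarith [exp_pos 1]) (by positivity)
      _ = 4 * (m + 1) * 4 ^ (m + 1) * (2 * m ^ (m + 1)) := by rw [mul_pow]; ring
      _ ≤ 4 * (m + 1) * 4 ^ (m + 1) * (m + 1) ^ (m + 1) := by gcongr
      _ = (4 * ((m + 1 : ℕ) : ℝ)) ^ (m + 1 + 1) := by rw [mul_pow, pow_succ]; push_cast; ring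

lemma exists_mul_prod_odd_le_pow {n : ℕ} (hn : 2 ≤ n) :
    ∃ k ≠ 0, n * ∏ j ∈ range k, (2 * j + 1 : ℝ) ≤ (4 * log n) ^ k := by
  have he : exp 1 < 2.7182818286 := exp_one_lt_d9
  have hn0 : (0 : ℝ) < n := by positivity
  by_cases hn8 : n < 8
  · refine ⟨1, one_ne_zero, ?_⟩
    have hexp : exp n ≤ (n : ℝ) ^ 4 := by
      rw [← exp_one_pow]
      refine (pow_le_pow_left₀ (exp_pos 1).le he.le n).trans ?_
      interval_cases n <;> norm_num
    have := log_le_log (exp_pos _) hexp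
    rw [log_exp, log_pow] at this
    simpa using this
  · have hL : 2 ≤ log n := by
      have h8 : (8 : ℝ) ≤ n := by exact_mod_cast not_lt.1 hn8
      rw [le_log_iff_exp_le hn0]
      calc exp 2 = exp 1 ^ 2 := by rw [exp_one_pow]; norm_num
        _ ≤ 2.7182818286 ^ 2 := pow_le_pow_left₀ (exp_pos 1).le he.le 2
        _ ≤ n := by linarith
    obtain ⟨m, hm, hmL, hLm⟩ : ∃ m : ℕ, 2 ≤ m ∧ (m : ℝ) ≤ log n ∧ log n < m + 1 :=
      ⟨⌊log n⌋₊, Nat.le_floor (by exact_mod_cast hL), Nat.floor_le (by linarith),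
        Nat.lt_floor_add_one _⟩
    refine ⟨m + 1, m.succ_ne_zero, ?_⟩
    calc n * ∏ j ∈ range (m + 1), (2 * j + 1 : ℝ)
        ≤ exp (m + 1) * ∏ j ∈ range (m + 1), (2 * j + 1 : ℝ) := by
          gcongr
          exact (exp_log hn0).symm.le.trans (exp_le_exp.2 hLm.le)
      _ ≤ (4 * m) ^ (m + 1) := exp_mul_prod_odd_le hm
      _ ≤ (4 * log n) ^ (m + 1) := by gcongr

/-- If `e` is uniform on the unit Euclidean sphere of `ℝⁿ` (`n ≥ 2`), then
`E[‖e‖_∞²] ≤ 4 (ln n)/n`. -/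
theorem sphere_linfty_norm_moment {n : ℕ} (hn : 2 ≤ n)
    (σ : Measure (EuclideanSpace ℝ (Fin n))) (hσ : IsUniformOnSphere σ) :
    ∫ e, linftyNorm e ^ 2 ∂σ ≤ 4 * Real.log n / n := by
  obtain ⟨k, hk, hnum⟩ := exists_mul_prod_odd_le_pow hn
  have hlog : 0 ≤ log n := log_nonneg (by exact_mod_cast (by omega : 1 ≤ n))
  refine (pow_le_pow_iff_left₀ (integral_nonneg fun x => sq_nonneg _) (by positivity) hk).1 ?_
  calc (∫ e, linftyNorm e ^ 2 ∂σ) ^ k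
      ≤ n * ∏ j ∈ range k, (2 * j + 1 : ℝ) / (n + 2 * j) := hσ.integral_linftyNorm_sq_pow_le hk
    _ ≤ n * ∏ j ∈ range k, (2 * j + 1 : ℝ) / n := by
        gcongr with j
        exact le_add_of_nonneg_right (by positivity)
    _ = n * (∏ j ∈ range k, (2 * j + 1 : ℝ)) / n ^ k := by
        rw [prod_div_distrib, prod_const, card_range, mul_div_assoc]
    _ ≤ (4 * log n) ^ k / n ^ k := by gcongr
    _ = (4 * log n / n) ^ k := (div_pow _ _ _).symm
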